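/- Let a < b be real, λ ∈ (0,1], and let G : ℝ → ℂ be a function, nonvanishing on [a,b], such that a continuous branch g := log G is Hölder continuous with exponent λ on [a,b]. Define ψ(K) = exp( (1/(2πi)) ∫_a^b g(X)/(X − K) dX ) for K ∈ ℂ ∖ [a,b]. Then ψ is holomorphic and nonvanishing on ℂ ∖ [a,b], ψ(K) → 1 as |K| → ∞, and for every t ∈ (a,b) the one-sided boundary values ψ₊(t) := lim_{ε→0⁺} ψ(t + iε) and ψ₋(t) := lim_{ε→0⁺} ψ(t − iε) exist and satisfy the jump relation ψ₊(t) = ψ₋(t)·G(t). -/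

import Mathlib

open Set Filter Complex intervalIntegral MeasureTheory Topology Bornology
open scoped Interval Real

/-!
The exponent of `ψ` is `(2πi)⁻¹ Φ`, where `Φ K = ∫_a^b g X / (X - K) dX` is the Cauchy transform
of `g`. Differentiating under the integral sign shows that `Φ` is holomorphic off `[a, b]`, and
dominated convergence shows that `Φ K → 0` as `K → ∞`.

For the jump at `t ∈ (a, b)`, split `g = (g - g t) + g t`. On the vertical line through `t` we
have `|X - t| ≤ |X - K|`, so the Hölder bound dominates `(g X - g t) / (X - K)` by the integrable
`c |X - t| ^ (λ - 1)`. Hence the first part is continuous across `t`. The second part is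
`g t (log (b - K) - log (a - K))`, and `a - K` crosses the branch cut of the principal logarithm,
so `log (a - K)` jumps by `2πi`. This gives `Φ₊ t - Φ₋ t = 2πi g t`, that is,
`ψ₊ t = ψ₋ t · exp (g t) = ψ₋ t · G t`.
-/

theorem continuousOn_of_norm_sub_le_mul_abs_rpow {E : Type*} [SeminormedAddCommGroup E]
    {f : ℝ → E} {s : Set ℝ} {c lam : ℝ} (hlam : 0 < lam)
    (hf : ∀ x ∈ s, ∀ y ∈ s, ‖f x - f y‖ ≤ c * |x - y| ^ lam) : ContinuousOn f s := by
  intro x hx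
  rw [ContinuousWithinAt, tendsto_iff_norm_sub_tendsto_zero]
  have hbound : Tendsto (fun y => c * |y - x| ^ lam) (𝓝[s] x) (𝓝 0) := by
    have hcont : Continuous fun y : ℝ => c * |y - x| ^ lam :=
      continuous_const.mul ((continuous_id.sub continuous_const).abs.rpow_const
        fun _ => Or.inr hlam.le)
    simpa [Real.zero_rpow hlam.ne'] using (hcont.tendsto x).mono_left nhdsWithin_le_nhds
  exact squeeze_zero' (Eventually.of_forall fun _ => norm_nonneg _)
    (eventually_nhdsWithin_of_forall fun y hy => hf y hy x hx) hbound

theorem intervalIntegrable_abs_sub_rpow {r : ℝ} (hr : -1 < r) (t a b : ℝ) :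
    IntervalIntegrable (fun x => |x - t| ^ r) volume a b := by
  have hpos : ∀ c, 0 ≤ c → IntervalIntegrable (fun x : ℝ => |x| ^ r) volume 0 c := fun c hc =>
    (intervalIntegrable_rpow' hr).congr_ae <| by
      rw [uIoc_of_le hc]
      filter_upwards [ae_restrict_mem measurableSet_Ioc] with x hx
      rw [abs_of_pos hx.1]
  have hall : ∀ c, IntervalIntegrable (fun x : ℝ => |x| ^ r) volume 0 c := by
    intro c
    rcases le_total 0 c with hc | hc
    · exact hpos c hc
    · simpa using (hpos (-c) (neg_nonneg.2 hc)).comp_sub_left 0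
  simpa using ((hall (a - t)).symm.trans (hall (b - t))).comp_sub_right t

noncomputable def cauchyTransform (a b : ℝ) (g : ℝ → ℂ) (K : ℂ) : ℂ :=
  ∫ X in a..b, g X / ((X : ℂ) - K)

section CauchyTransform

variable {a b : ℝ} {g : ℝ → ℂ}

theorem hasDerivAt_cauchyTransform (hg : IntervalIntegrable g volume a b) {K : ℂ}
    (hK : K ∉ ofReal '' [[a, b]]) :
    HasDerivAt (cauchyTransform a b g) (∫ X in a..b, g X / ((X : ℂ) - K) ^ 2) K := by
  have hclosed : IsClosed (ofReal '' [[a, b]]) :=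
    (isCompact_uIcc.image continuous_ofReal).isClosed
  obtain ⟨δ, hδ, hball⟩ := Metric.isOpen_iff.1 hclosed.isOpen_compl K hK
  have hfar : ∀ K' ∈ Metric.ball K (δ / 2), ∀ X ∈ Ι a b, δ / 2 ≤ ‖(X : ℂ) - K'‖ := by
    intro K' hK' X hX
    have hXK : δ ≤ dist (X : ℂ) K := not_lt.1 fun h =>
      hball h ⟨X, uIoc_subset_uIcc hX, rfl⟩
    have := dist_triangle (X : ℂ) K' K
    rw [Metric.mem_ball] at hK'
    rw [← Complex.dist_eq]
    linarith
  have hne : ∀ K' ∈ Metric.ball K (δ / 2), ∀ X ∈ Ι a b, (X : ℂ) - K' ≠ 0 := fun K' hK' X hX =>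
    norm_pos_iff.1 ((half_pos hδ).trans_le (hfar K' hK' X hX))
  have hmeas : ∀ (K' : ℂ) (n : ℕ), AEStronglyMeasurable (fun X : ℝ => g X / ((X : ℂ) - K') ^ n)
      (volume.restrict (Ι a b)) := fun K' n =>
    hg.aestronglyMeasurable_restrict_uIoc.div₀
      (by fun_prop : Continuous fun X : ℝ => ((X : ℂ) - K') ^ n).aestronglyMeasurable
  refine (hasDerivAt_integral_of_dominated_loc_of_deriv_le
    (F := fun K' X => g X / ((X : ℂ) - K')) (F' := fun K' X => g X / ((X : ℂ) - K') ^ 2)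
    (bound := fun X => ‖g X‖ / (δ / 2) ^ 2) (Metric.ball_mem_nhds K (half_pos hδ))
    (Eventually.of_forall fun K' => by simpa using hmeas K' 1) ?_
    (hmeas K 2) ?_ (hg.norm.div_const _) ?_).2
  · have hinv : ContinuousOn (fun X : ℝ => ((X : ℂ) - K)⁻¹) [[a, b]] :=
      ContinuousOn.inv₀ (by fun_prop) fun X hX h => hK ⟨X, hX, sub_eq_zero.1 h⟩
    simpa only [div_eq_mul_inv] using hg.mul_continuousOn hinv
  · refine Eventually.of_forall fun X hX K' hK' => ?_
    rw [norm_div, norm_pow]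
    gcongr
    exact hfar K' hK' X hX
  · refine Eventually.of_forall fun X hX K' hK' => ?_
    exact ((hasDerivAt_const K' (g X)).div ((hasDerivAt_id' K').const_sub (X : ℂ))
      (hne K' hK' X hX)).congr_deriv (by ring)

theorem tendsto_cauchyTransform_cobounded (hg : IntervalIntegrable g volume a b) :
    Tendsto (cauchyTransform a b g) (cobounded ℂ) (𝓝 0) := by
  have : (cobounded ℂ).IsCountablyGenerated := comap_norm_atTop (E := ℂ) ▸ inferInstance
  obtain ⟨R, hR⟩ := (isCompact_uIcc.image continuous_ofReal).isBounded.exists_norm_le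
  have hfar : ∀ᶠ K in cobounded ℂ, ∀ X ∈ Ι a b, 1 ≤ ‖(X : ℂ) - K‖ := by
    filter_upwards [eventually_cobounded_le_norm (R + 1)] with K hK X hX
    have := hR _ ⟨X, uIoc_subset_uIcc hX, rfl⟩
    have := norm_sub_norm_le K (X : ℂ)
    rw [norm_sub_rev] at this
    linarith
  have h := intervalIntegral.tendsto_integral_filter_of_dominated_convergence
    (F := fun K X => g X / ((X : ℂ) - K)) (f := fun _ => 0) (μ := volume) (fun X => ‖g X‖)
    (Eventually.of_forall fun K => hg.aestronglyMeasurable_restrict_uIoc.div₀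
      (by fun_prop : Continuous fun X : ℝ => (X : ℂ) - K).aestronglyMeasurable)
    (hfar.mono fun K hK => Eventually.of_forall fun X hX => by
      rw [norm_div]
      exact div_le_self (norm_nonneg _) (hK X hX))
    hg.norm
    (Eventually.of_forall fun X _ => by
      simpa [div_eq_mul_inv] using
        (tendsto_inv₀_cobounded.comp (tendsto_const_sub_cobounded (X : ℂ))).const_mul (g X))
  rw [intervalIntegral.integral_zero] at h
  exact h

theorem integral_inv_ofReal_sub {K : ℂ} (hK : K.im ≠ 0) :
    ∫ X in a..b, ((X : ℂ) - K)⁻¹ = log (b - K) - log (a - K) := by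
  have hslit : ∀ X : ℝ, (X : ℂ) - K ∈ slitPlane := fun X => Or.inr (by simpa using hK)
  refine integral_eq_sub_of_hasDerivAt (f := fun X : ℝ => log ((X : ℂ) - K)) (fun X _ => ?_) ?_
  · simpa using ((hasDerivAt_id' (X : ℂ)).sub_const K).clog (hslit X) |>.comp_ofReal
  · exact (ContinuousOn.inv₀ (by fun_prop) fun X _ =>
      slitPlane_ne_zero (hslit X)).intervalIntegrable

theorem cauchyTransform_eq_sub_const_add_log (hg : IntervalIntegrable g volume a b) {K : ℂ}
    (hK : K.im ≠ 0) (w : ℂ) :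
    cauchyTransform a b g K =
      cauchyTransform a b (fun X => g X - w) K + w * (log (b - K) - log (a - K)) := by
  have hinv : ContinuousOn (fun X : ℝ => ((X : ℂ) - K)⁻¹) [[a, b]] :=
    ContinuousOn.inv₀ (by fun_prop) fun X _ h => hK (by simpa using congrArg im h)
  have hint : IntervalIntegrable (fun X : ℝ => (g X - w) / ((X : ℂ) - K)) volume a b := by
    simpa only [div_eq_mul_inv] using (hg.sub intervalIntegrable_const).mul_continuousOn hinv
  rw [← integral_inv_ofReal_sub hK, ← intervalIntegral.integral_const_mul, cauchyTransform,
    cauchyTransform, ← integral_add hint (hinv.intervalIntegrable.const_mul w)]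
  congr 1
  ext X
  ring

theorem tendsto_ofReal_sub_add_mul_I (x t : ℝ) :
    Tendsto (fun ε : ℝ => (x : ℂ) - (t + ε * I)) (𝓝 0) (𝓝 (x - t)) := by
  simpa using (show Continuous fun ε : ℝ => (x : ℂ) - (t + ε * I) by fun_prop).tendsto 0

theorem tendsto_cauchyTransform_sub_vertical {t c lam : ℝ} (hlam : 0 < lam)
    (hg : IntervalIntegrable g volume a b)
    (hHolder : ∀ x ∈ [[a, b]], ‖g x - g t‖ ≤ c * |x - t| ^ lam) :
    Tendsto (fun ε : ℝ => cauchyTransform a b (fun X => g X - g t) (t + ε * I)) (𝓝 0)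
      (𝓝 (cauchyTransform a b (fun X => g X - g t) t)) := by
  refine intervalIntegral.tendsto_integral_filter_of_dominated_convergence
    (F := fun (ε : ℝ) X => (g X - g t) / ((X : ℂ) - (t + ε * I))) (μ := volume)
    (fun X => c * |X - t| ^ (lam - 1)) (Eventually.of_forall fun ε => ?_)
    (Eventually.of_forall fun ε => ?_)
    ((intervalIntegrable_abs_sub_rpow (by linarith) t a b).const_mul c) ?_
  · exact (hg.sub intervalIntegrable_const).aestronglyMeasurable_restrict_uIoc.div₀
      (by fun_prop : Continuous fun X : ℝ => (X : ℂ) - (t + ε * I)).aestronglyMeasurable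
  · filter_upwards [volume.ae_ne t] with X hXt hX
    have hpos : 0 < |X - t| := abs_pos.2 (sub_ne_zero.2 hXt)
    have hre : |X - t| ≤ ‖(X : ℂ) - (t + ε * I)‖ := by
      simpa using abs_re_le_norm ((X : ℂ) - (t + ε * I))
    have hH := hHolder X (uIoc_subset_uIcc hX)
    calc ‖(g X - g t) / ((X : ℂ) - (t + ε * I))‖
        ≤ c * |X - t| ^ lam / |X - t| := by
          rw [norm_div]
          exact div_le_div₀ ((norm_nonneg _).trans hH) hH hpos hre
      _ = c * |X - t| ^ (lam - 1) := by rw [Real.rpow_sub_one hpos.ne', mul_div_assoc]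
  · filter_upwards [volume.ae_ne t] with X hXt _
    have hne : (X : ℂ) - t ≠ 0 := sub_ne_zero.2 (ofReal_injective.ne hXt)
    exact tendsto_const_nhds.div (tendsto_ofReal_sub_add_mul_I X t) hne

theorem tendsto_log_ofReal_sub_add_mul_I_nhdsGT {x t : ℝ} (hxt : x < t) :
    Tendsto (fun ε : ℝ => log (x - (t + ε * I))) (𝓝[>] 0) (𝓝 (Real.log (t - x) - π * I)) := by
  have hnorm : ‖(x : ℂ) - t‖ = t - x := by
    rw [← ofReal_sub, norm_real, Real.norm_of_nonpos (by linarith), neg_sub]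
  have hlog := tendsto_log_nhdsWithin_im_neg_of_re_neg_of_im_zero (z := x - t)
    (by simpa using hxt) (by simp)
  rw [hnorm] at hlog
  refine hlog.comp (tendsto_nhdsWithin_iff.2
    ⟨(tendsto_ofReal_sub_add_mul_I x t).mono_left nhdsWithin_le_nhds, ?_⟩)
  filter_upwards [self_mem_nhdsWithin] with ε hε
  simpa using hε

theorem tendsto_log_ofReal_sub_add_mul_I_nhdsLT {x t : ℝ} (hxt : x < t) :
    Tendsto (fun ε : ℝ => log (x - (t + ε * I))) (𝓝[<] 0) (𝓝 (Real.log (t - x) + π * I)) := by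
  have hnorm : ‖(x : ℂ) - t‖ = t - x := by
    rw [← ofReal_sub, norm_real, Real.norm_of_nonpos (by linarith), neg_sub]
  have hlog := tendsto_log_nhdsWithin_im_nonneg_of_re_neg_of_im_zero (z := x - t)
    (by simpa using hxt) (by simp)
  rw [hnorm] at hlog
  refine hlog.comp (tendsto_nhdsWithin_iff.2
    ⟨(tendsto_ofReal_sub_add_mul_I x t).mono_left nhdsWithin_le_nhds, ?_⟩)
  filter_upwards [self_mem_nhdsWithin] with ε hε
  simpa using le_of_lt hε

/-- The principal value `⨍_a^b g X / (X - t) dX`: the absolutely convergent integral of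
`(g X - g t) / (X - t)` plus `g t` times the principal value `log ((b - t) / (t - a))` of
`∫_a^b dX / (X - t)`. -/
noncomputable def cauchyPrincipalValue (a b : ℝ) (g : ℝ → ℂ) (t : ℝ) : ℂ :=
  cauchyTransform a b (fun X => g X - g t) t + g t * (Real.log (b - t) - Real.log (t - a))

section Plemelj

variable {t c lam : ℝ} (hlam : 0 < lam) (hg : IntervalIntegrable g volume a b)
  (hHolder : ∀ x ∈ [[a, b]], ‖g x - g t‖ ≤ c * |x - t| ^ lam)
include hlam hg hHolder

theorem tendsto_cauchyTransform_vertical {l : Filter ℝ} (hl : l ≤ 𝓝[≠] 0) (htb : t < b) {L : ℂ}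
    (hL : Tendsto (fun ε : ℝ => log (a - (t + ε * I))) l (𝓝 L)) :
    Tendsto (fun ε : ℝ => cauchyTransform a b g (t + ε * I)) l
      (𝓝 (cauchyTransform a b (fun X => g X - g t) t + g t * (Real.log (b - t) - L))) := by
  have hlogb : Tendsto (fun ε : ℝ => log (b - (t + ε * I))) (𝓝 0) (𝓝 (Real.log (b - t))) := by
    rw [ofReal_log (by linarith), ofReal_sub]
    exact ((continuousAt_clog (by simpa [← ofReal_sub] using htb)).tendsto).comp
      (tendsto_ofReal_sub_add_mul_I b t)
  have hle : l ≤ 𝓝 0 := hl.trans nhdsWithin_le_nhds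
  refine (((tendsto_cauchyTransform_sub_vertical hlam hg hHolder).mono_left hle).add
    (((hlogb.mono_left hle).sub hL).const_mul (g t))).congr' ?_
  filter_upwards [hl self_mem_nhdsWithin] with ε hε
  exact (cauchyTransform_eq_sub_const_add_log hg (by simpa using hε) (g t)).symm

theorem tendsto_cauchyTransform_add_mul_I (ht : t ∈ Ioo a b) :
    Tendsto (fun ε : ℝ => cauchyTransform a b g (t + ε * I)) (𝓝[>] 0)
      (𝓝 (cauchyPrincipalValue a b g t + π * I * g t)) := by
  convert tendsto_cauchyTransform_vertical hlam hg hHolder (l := 𝓝[>] 0)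
    (nhdsWithin_mono _ fun _ hε => ne_of_gt hε) ht.2 (tendsto_log_ofReal_sub_add_mul_I_nhdsGT ht.1)
    using 2
  rw [cauchyPrincipalValue]
  ring

theorem tendsto_cauchyTransform_sub_mul_I (ht : t ∈ Ioo a b) :
    Tendsto (fun ε : ℝ => cauchyTransform a b g (t - ε * I)) (𝓝[>] 0)
      (𝓝 (cauchyPrincipalValue a b g t - π * I * g t)) := by
  have hlower := tendsto_cauchyTransform_vertical hlam hg hHolder (l := 𝓝[<] 0)
    (nhdsWithin_mono _ fun _ hε => ne_of_lt hε) ht.2 (tendsto_log_ofReal_sub_add_mul_I_nhdsLT ht.1)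
  have hneg : Tendsto (fun ε : ℝ => -ε) (𝓝[>] 0) (𝓝[<] 0) := by
    simpa using tendsto_neg_nhdsGT_neg (a := (0 : ℝ))
  convert hlower.comp hneg using 2
  · simp [sub_eq_add_neg]
  · rw [cauchyPrincipalValue]
    ring

end Plemelj

end CauchyTransform

theorem scalar_riemann_hilbert_solution_general
    (a b : ℝ) (hab : a < b) (lam : ℝ) (hlam : lam ∈ Set.Ioc (0 : ℝ) 1)
    (G g : ℝ → ℂ)
    (hlog : ∀ x ∈ Set.Icc a b, Complex.exp (g x) = G x)
    (c : ℝ)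
    (hHolder : ∀ x ∈ Set.Icc a b, ∀ y ∈ Set.Icc a b,
      ‖g x - g y‖ ≤ c * |x - y| ^ lam)
    (ψ : ℂ → ℂ)
    (hψ : ∀ K : ℂ, K ∉ ((fun x : ℝ => (x : ℂ)) '' Set.Icc a b) →
      ψ K = Complex.exp
        ((1 / (2 * Real.pi * I)) * ∫ X in a..b, g X / ((X : ℂ) - K))) :
    (∀ K ∈ ((fun x : ℝ => (x : ℂ)) '' Set.Icc a b)ᶜ,
        DifferentiableAt ℂ ψ K ∧ ψ K ≠ 0) ∧
    Tendsto ψ (Bornology.cobounded ℂ) (nhds 1) ∧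
    ∀ t ∈ Set.Ioo a b, ∃ ψp ψm : ℂ,
      Tendsto (fun ε : ℝ => ψ ((t : ℂ) + ε * I))
        (nhdsWithin 0 (Set.Ioi 0)) (nhds ψp) ∧
      Tendsto (fun ε : ℝ => ψ ((t : ℂ) - ε * I))
        (nhdsWithin 0 (Set.Ioi 0)) (nhds ψm) ∧
      ψp = ψm * G t := by
  set S := (fun x : ℝ => (x : ℂ)) '' Icc a b
  have hS : IsCompact S := isCompact_Icc.image continuous_ofReal
  have hg : IntervalIntegrable g volume a b :=
    (continuousOn_of_norm_sub_le_mul_abs_rpow hlam.1 hHolder).intervalIntegrable_of_Icc hab.le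
  have hoff : ∀ K : ℂ, K.im ≠ 0 → K ∉ S := by
    rintro K hK ⟨x, -, rfl⟩
    exact hK (ofReal_im x)
  have transfer : ∀ {α : Type} {l : Filter α} {k : α → ℂ} {w : ℂ}, (∀ᶠ x in l, k x ∉ S) →
      Tendsto (fun x => cauchyTransform a b g (k x)) l (𝓝 w) →
      Tendsto (fun x => ψ (k x)) l (𝓝 (exp (1 / (2 * π * I) * w))) := fun hk hw =>
    ((continuous_exp.tendsto _).comp (hw.const_mul _)).congr' (hk.mono fun x hx => (hψ _ hx).symm)
  refine ⟨fun K hK => ⟨?_, ?_⟩, ?_, fun t ht => ?_⟩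
  · have hK' : K ∉ ofReal '' [[a, b]] := by rwa [uIcc_of_le hab.le]
    refine (((hasDerivAt_cauchyTransform hg hK').differentiableAt.const_mul
      (1 / (2 * π * I))).cexp).congr_of_eventuallyEq ?_
    filter_upwards [hS.isClosed.isOpen_compl.mem_nhds hK] with K hK using hψ K hK
  · rw [hψ K hK]
    exact exp_ne_zero _
  · simpa using transfer (k := id) (isBounded_def.1 hS.isBounded)
      (tendsto_cauchyTransform_cobounded hg)
  · have hHt : ∀ x ∈ [[a, b]], ‖g x - g t‖ ≤ c * |x - t| ^ lam := fun x hx =>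
      hHolder x (by rwa [uIcc_of_le hab.le] at hx) t (Ioo_subset_Icc_self ht)
    have hpos : ∀ᶠ ε in 𝓝[>] (0 : ℝ), ε ≠ 0 :=
      eventually_nhdsWithin_of_forall fun ε hε => ne_of_gt hε
    refine ⟨_, _, transfer (hpos.mono fun ε hε => hoff _ (by simpa using hε))
      (tendsto_cauchyTransform_add_mul_I hlam.1 hg hHt ht),
      transfer (hpos.mono fun ε hε => hoff _ (by simpa using hε))
      (tendsto_cauchyTransform_sub_mul_I hlam.1 hg hHt ht), ?_⟩
    rw [← hlog t (Ioo_subset_Icc_self ht), ← exp_add]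
    congr 1
    field_simp
    ring

/-- Solution of the scalar Riemann–Hilbert problem ψ₊ = ψ₋·G on the real
interval [a,b]: the Cauchy-integral exponential
ψ(K) = exp((1/2πi)∫_a^b log G(X)/(X − K) dX) is holomorphic and nonvanishing
off [a,b], normalized to 1 at infinity, and its boundary values from the
upper (+) and lower (−) half-planes exist and satisfy ψ₊ = ψ₋·G on (a,b). -/
theorem scalar_riemann_hilbert_solution
    (a b : ℝ) (hab : a < b) (lam : ℝ) (hlam : lam ∈ Set.Ioc (0 : ℝ) 1)
    (G g : ℝ → ℂ)
    (hGne : ∀ x ∈ Set.Icc a b, G x ≠ 0)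
    (hlog : ∀ x ∈ Set.Icc a b, Complex.exp (g x) = G x)
    (c : ℝ) (hc : 0 ≤ c)
    (hHolder : ∀ x ∈ Set.Icc a b, ∀ y ∈ Set.Icc a b,
      ‖g x - g y‖ ≤ c * |x - y| ^ lam)
    (ψ : ℂ → ℂ)
    (hψ : ∀ K : ℂ, K ∉ ((fun x : ℝ => (x : ℂ)) '' Set.Icc a b) →
      ψ K = Complex.exp
        ((1 / (2 * Real.pi * I)) * ∫ X in a..b, g X / ((X : ℂ) - K))) :
    (∀ K ∈ ((fun x : ℝ => (x : ℂ)) '' Set.Icc a b)ᶜ,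
        DifferentiableAt ℂ ψ K ∧ ψ K ≠ 0) ∧
    Tendsto ψ (Bornology.cobounded ℂ) (nhds 1) ∧
    ∀ t ∈ Set.Ioo a b, ∃ ψp ψm : ℂ,
      Tendsto (fun ε : ℝ => ψ ((t : ℂ) + ε * I))
        (nhdsWithin 0 (Set.Ioi 0)) (nhds ψp) ∧
      Tendsto (fun ε : ℝ => ψ ((t : ℂ) - ε * I))
        (nhdsWithin 0 (Set.Ioi 0)) (nhds ψm) ∧
      ψp = ψm * G t :=
  scalar_riemann_hilbert_solution_general a b hab lam hlam G g hlog c hHolder ψ hψ
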